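/- arXiv:1903.01897 — 3 statements merged into one kernel-verified Lean document; each statement's English description precedes it below -/
import Mathlib

section
/- Suppose for every Boolean subalgebra B of a Boolean algebra A with at most 8 elements we are given a Boolean homomorphism s_B : B → Bool, compatibly with inclusions (s_{B'} = s_B restricted to B' whenever B' ⊆ B). Then the function σ : A → Bool defined by σ(a) = s_{B_a}(a), where B_a is the subalgebra generated by a (with σ(⊥)=0, σ(⊤)=1), is finitely additive: σ(p ∨ q) = σ(p) + σ(q) for disjoint p, q, and conversely every finitely additive {0,1}-valued measure on A arises from such a compatible family. -/
/-- A Boolean subalgebra of a Boolean algebra, as a subset closed under the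
Boolean operations and containing `⊥` and `⊤`. -/
def IsBoolSubalg {A : Type*} [BooleanAlgebra A] (s : Set A) : Prop :=
  ⊥ ∈ s ∧ ⊤ ∈ s ∧ (∀ x ∈ s, ∀ y ∈ s, x ⊔ y ∈ s) ∧
    (∀ x ∈ s, ∀ y ∈ s, x ⊓ y ∈ s) ∧ (∀ x ∈ s, xᶜ ∈ s)

/-- The Boolean subalgebra generated by a single element `a`. -/
def genSub {A : Type*} [BooleanAlgebra A] (a : A) : Set A := {⊥, a, aᶜ, ⊤}

/-- A finitely additive `{0,1}`-valued measure on a Boolean algebra. -/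
def IsMeasure {A : Type*} [BooleanAlgebra A] (σ : A → Bool) : Prop :=
  σ ⊤ = true ∧ σ ⊥ = false ∧
    ∀ p q : A, p ⊓ q = ⊥ → (σ (p ⊔ q)).toNat = (σ p).toNat + (σ q).toNat

/-- `f` is a Boolean algebra homomorphism to `Bool` on the subset `S`. -/
def IsHomOn {A : Type*} [BooleanAlgebra A] (S : Set A) (f : A → Bool) : Prop :=
  f ⊤ = true ∧ f ⊥ = false ∧
    (∀ x ∈ S, ∀ y ∈ S, f (x ⊔ y) = (f x || f y)) ∧
    (∀ x ∈ S, ∀ y ∈ S, f (x ⊓ y) = (f x && f y)) ∧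
    (∀ x ∈ S, f xᶜ = !(f x))

/-- A compatible family of `Bool`-valued homomorphisms on all Boolean subalgebras
with at most 8 elements ("global section over small contexts"). -/
def IsSmallSection {A : Type*} [BooleanAlgebra A] (s : Set A → A → Bool) : Prop :=
  (∀ S : Set A, IsBoolSubalg S → S.Finite → S.ncard ≤ 8 → IsHomOn S (s S)) ∧
  (∀ S S' : Set A, IsBoolSubalg S → S.Finite → S.ncard ≤ 8 →
    IsBoolSubalg S' → S'.Finite → S'.ncard ≤ 8 → S' ⊆ S → ∀ a ∈ S', s S' a = s S a)

section Aux
variable {A : Type*} [BooleanAlgebra A]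

lemma genSub_subalg (a : A) : IsBoolSubalg (genSub a) := by
  simp only [IsBoolSubalg, genSub, Set.mem_insert_iff, Set.mem_singleton_iff]
  refine ⟨by tauto, by tauto, ?_, ?_, ?_⟩
  · rintro x (rfl|rfl|rfl|rfl) y (rfl|rfl|rfl|rfl) <;> simp
  · rintro x (rfl|rfl|rfl|rfl) y (rfl|rfl|rfl|rfl) <;> simp
  · rintro x (rfl|rfl|rfl|rfl) <;> simp

lemma genSub_finite (a : A) : (genSub a).Finite :=
  ((((Set.finite_singleton ⊤).insert aᶜ).insert a).insert ⊥)

lemma genSub_ncard (a : A) : (genSub a).ncard ≤ 8 := by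
  unfold genSub
  have h1 : (insert ⊥ {a, aᶜ, ⊤} : Set A).ncard ≤ ({a, aᶜ, ⊤} : Set A).ncard + 1 :=
    Set.ncard_insert_le _ _
  have h2 : ({a, aᶜ, ⊤} : Set A).ncard ≤ ({aᶜ, ⊤} : Set A).ncard + 1 := Set.ncard_insert_le _ _
  have h3 : ({aᶜ, ⊤} : Set A).ncard ≤ ({⊤} : Set A).ncard + 1 := Set.ncard_insert_le _ _
  have h4 : ({⊤} : Set A).ncard = 1 := Set.ncard_singleton _
  omega

def trip (p q r : A) (t : Bool × Bool × Bool) : A :=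
  (cond t.1 p ⊥) ⊔ (cond t.2.1 q ⊥) ⊔ (cond t.2.2 r ⊥)

set_option maxHeartbeats 1000000 in
lemma trip_sup (p q r : A) :
    ∀ s t, trip p q r s ⊔ trip p q r t =
      trip p q r (s.1 || t.1, s.2.1 || t.2.1, s.2.2 || t.2.2) := by
  rintro ⟨a, b, c⟩ ⟨d, e, g⟩
  cases a <;> cases b <;> cases c <;> cases d <;> cases e <;> cases g <;>
    simp [trip, sup_comm, sup_assoc, sup_left_comm]

set_option maxHeartbeats 1000000 in
lemma trip_inf (p q r : A) (hpq : p ⊓ q = ⊥) (hqp : q ⊓ p = ⊥) (hpr : p ⊓ r = ⊥)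
    (hrp : r ⊓ p = ⊥) (hqr : q ⊓ r = ⊥) (hrq : r ⊓ q = ⊥) :
    ∀ s t, trip p q r s ⊓ trip p q r t =
      trip p q r (s.1 && t.1, s.2.1 && t.2.1, s.2.2 && t.2.2) := by
  rintro ⟨a, b, c⟩ ⟨d, e, g⟩
  cases a <;> cases b <;> cases c <;> cases d <;> cases e <;> cases g <;>
    simp [trip, inf_sup_left, inf_sup_right, hpq, hqp, hpr, hrp, hqr, hrq]

set_option maxHeartbeats 1000000 in
lemma trip_compl (p q r : A) (hpc : pᶜ = q ⊔ r) (hqc : qᶜ = p ⊔ r) (hrc : rᶜ = p ⊔ q)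
    (hqrc : (q ⊔ r)ᶜ = p) (hprc : (p ⊔ r)ᶜ = q) (hpqc : (p ⊔ q)ᶜ = r)
    (htop : p ⊔ q ⊔ r = ⊤) :
    ∀ s, (trip p q r s)ᶜ = trip p q r (!s.1, !s.2.1, !s.2.2) := by
  rintro ⟨a, b, c⟩
  cases a <;> cases b <;> cases c <;>
    simp [trip, hpc, hqc, hrc, hqrc, hprc, hpqc, htop, sup_assoc]

set_option maxHeartbeats 1000000 in
lemma exists_common (p q : A) (hpq : p ⊓ q = ⊥) :
    ∃ S : Set A, IsBoolSubalg S ∧ S.Finite ∧ S.ncard ≤ 8 ∧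
      genSub p ⊆ S ∧ genSub q ⊆ S ∧ genSub (p ⊔ q) ⊆ S := by
  set r : A := (p ⊔ q)ᶜ with hr
  have hqp : q ⊓ p = ⊥ := by rw [inf_comm]; exact hpq
  have hpr : p ⊓ r = ⊥ := by
    have h := inf_le_inf_right r (le_sup_left : p ≤ p ⊔ q)
    rw [hr, inf_compl_eq_bot] at h; exact le_bot_iff.1 h
  have hqr : q ⊓ r = ⊥ := by
    have h := inf_le_inf_right r (le_sup_right : q ≤ p ⊔ q)
    rw [hr, inf_compl_eq_bot] at h; exact le_bot_iff.1 h
  have hrp : r ⊓ p = ⊥ := by rw [inf_comm]; exact hpr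
  have hrq : r ⊓ q = ⊥ := by rw [inf_comm]; exact hqr
  have htop : p ⊔ q ⊔ r = ⊤ := by rw [hr, sup_compl_eq_top]
  have hpc : pᶜ = q ⊔ r := by
    apply compl_unique
    · simp [inf_sup_left, hpq, hpr]
    · rw [← sup_assoc]; exact htop
  have hqc : qᶜ = p ⊔ r := by
    apply compl_unique
    · simp [inf_sup_left, hqp, hqr]
    · rw [← sup_assoc, sup_comm q p]; exact htop
  have hrc : rᶜ = p ⊔ q := by rw [hr, compl_compl]
  have hqrc : (q ⊔ r)ᶜ = p := by rw [← hpc, compl_compl]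
  have hprc : (p ⊔ r)ᶜ = q := by rw [← hqc, compl_compl]
  have hallc : (p ⊔ q ⊔ r)ᶜ = (⊥ : A) := by rw [htop, compl_top]
  have hpqc : (p ⊔ q)ᶜ = r := hr.symm
  have jsup := trip_sup p q r
  have jinf := trip_inf p q r hpq hqp hpr hrp hqr hrq
  have jcompl := trip_compl p q r hpc hqc hrc hqrc hprc hpqc htop
  set f : Bool × Bool × Bool → A := trip p q r with hf
  refine ⟨Set.range f, ⟨⟨(false, false, false), by simp [hf, trip]⟩,
      ⟨(true, true, true), by simp [hf, trip, htop]⟩, ?_, ?_, ?_⟩, Set.finite_range f, ?_, ?_, ?_, ?_⟩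
  · rintro x ⟨s, rfl⟩ y ⟨t, rfl⟩; exact ⟨_, (jsup s t).symm⟩
  · rintro x ⟨s, rfl⟩ y ⟨t, rfl⟩; exact ⟨_, (jinf s t).symm⟩
  · rintro x ⟨s, rfl⟩; exact ⟨_, (jcompl s).symm⟩
  · rw [← Set.image_univ]
    calc (f '' Set.univ).ncard ≤ Set.univ.ncard := Set.ncard_image_le Set.finite_univ
      _ ≤ 8 := by rw [Set.ncard_univ]; simp [Nat.card_eq_fintype_card]
  · rintro x (rfl|rfl|rfl|rfl)
    · exact ⟨(false, false, false), by simp [hf, trip]⟩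
    · exact ⟨(true, false, false), by simp [hf, trip]⟩
    · exact ⟨(false, true, true), by simp [hf, trip, hpc]⟩
    · exact ⟨(true, true, true), by simp [hf, trip, htop]⟩
  · rintro x (rfl|rfl|rfl|rfl)
    · exact ⟨(false, false, false), by simp [hf, trip]⟩
    · exact ⟨(false, true, false), by simp [hf, trip]⟩
    · exact ⟨(true, false, true), by simp [hf, trip, hqc]⟩
    · exact ⟨(true, true, true), by simp [hf, trip, htop]⟩
  · rintro x (rfl|rfl|rfl|rfl)
    · exact ⟨(false, false, false), by simp [hf, trip]⟩
    · exact ⟨(true, true, false), by simp [hf, trip]⟩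
    · exact ⟨(false, false, true), by simp [hf, trip, hr, compl_sup]⟩
    · exact ⟨(true, true, true), by simp [hf, trip, htop]⟩

end Aux

set_option maxHeartbeats 1000000 in
/-- From a compatible family of homomorphisms over the small contexts, setting
`σ a = s (genSub a) a` yields a finitely additive `{0,1}`-valued measure; and conversely
every finitely additive `{0,1}`-valued measure arises from such a compatible family. -/
theorem sections_correspond_to_measures {A : Type*} [BooleanAlgebra A] :
    (∀ s : Set A → A → Bool, IsSmallSection s → IsMeasure (fun a => s (genSub a) a)) ∧
    (∀ σ : A → Bool, IsMeasure σ →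
      ∃ s : Set A → A → Bool, IsSmallSection s ∧ ∀ a : A, s (genSub a) a = σ a) := by
  constructor
  · intro s hs
    have hhom : ∀ a : A, IsHomOn (genSub a) (s (genSub a)) :=
      fun a => hs.1 _ (genSub_subalg a) (genSub_finite a) (genSub_ncard a)
    refine ⟨(hhom ⊤).1, (hhom ⊥).2.1, ?_⟩
    intro p q hpq
    obtain ⟨S, hSalg, hSfin, hSc, hsubp, hsubq, hsubpq⟩ := exists_common p q hpq
    have hSh := hs.1 S hSalg hSfin hSc
    have hpS : p ∈ S := hsubp (by simp [genSub])
    have hqS : q ∈ S := hsubq (by simp [genSub])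
    have e1 : s (genSub (p ⊔ q)) (p ⊔ q) = s S (p ⊔ q) :=
      hs.2 S (genSub (p ⊔ q)) hSalg hSfin hSc (genSub_subalg _) (genSub_finite _)
        (genSub_ncard _) hsubpq _ (by simp [genSub])
    have e2 : s (genSub p) p = s S p :=
      hs.2 S (genSub p) hSalg hSfin hSc (genSub_subalg _) (genSub_finite _)
        (genSub_ncard _) hsubp _ (by simp [genSub])
    have e3 : s (genSub q) q = s S q :=
      hs.2 S (genSub q) hSalg hSfin hSc (genSub_subalg _) (genSub_finite _)
        (genSub_ncard _) hsubq _ (by simp [genSub])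
    have e4 : s S (p ⊔ q) = (s S p || s S q) := hSh.2.2.1 p hpS q hqS
    have e5 : (s S p && s S q) = false := by
      have h := hSh.2.2.2.1 p hpS q hqS
      rw [hpq, hSh.2.1] at h; exact h.symm
    simp only [e1, e2, e3, e4]
    cases h1 : s S p <;> cases h2 : s S q <;> simp_all
  · intro σ hσ
    obtain ⟨ht, hb, hadd⟩ := hσ
    have hmono : ∀ x y : A, x ≤ y → σ x = true → σ y = true := by
      intro x y hxy hx
      have hd : x ⊓ (y ⊓ xᶜ) = ⊥ := by rw [inf_left_comm, inf_compl_eq_bot, inf_bot_eq]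
      have hu : x ⊔ (y ⊓ xᶜ) = y := by
        rw [sup_inf_left, sup_compl_eq_top, inf_top_eq, sup_eq_right.2 hxy]
      have h := hadd x (y ⊓ xᶜ) hd
      rw [hu, hx] at h
      cases hy : σ y
      · rw [hy] at h; simp only [Bool.toNat_false, Bool.toNat_true] at h; omega
      · rfl
    have hcompl : ∀ x : A, σ xᶜ = !σ x := by
      intro x
      have h := hadd x xᶜ inf_compl_eq_bot
      rw [sup_compl_eq_top, ht] at h
      cases h1 : σ x <;> cases h2 : σ xᶜ <;> simp_all
    have hsup : ∀ x y : A, σ (x ⊔ y) = (σ x || σ y) := by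
      intro x y
      have hd : x ⊓ (y ⊓ xᶜ) = ⊥ := by rw [inf_left_comm, inf_compl_eq_bot, inf_bot_eq]
      have hu : x ⊔ (y ⊓ xᶜ) = x ⊔ y := by rw [sup_inf_left, sup_compl_eq_top, inf_top_eq]
      have h1 := hadd x (y ⊓ xᶜ) hd
      rw [hu] at h1
      have hd2 : (y ⊓ x) ⊓ (y ⊓ xᶜ) = ⊥ := by
        have h := inf_le_inf (inf_le_right : y ⊓ x ≤ x) (inf_le_right : y ⊓ xᶜ ≤ xᶜ)
        rw [inf_compl_eq_bot] at h; exact le_bot_iff.1 h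
      have hu2 : (y ⊓ x) ⊔ (y ⊓ xᶜ) = y := by
        rw [← inf_sup_left, sup_compl_eq_top, inf_top_eq]
      have h2 := hadd _ _ hd2
      rw [hu2] at h2
      have h3 : σ (y ⊓ x) = true → σ x = true := hmono _ _ inf_le_right
      cases ha : σ x <;> cases hb2 : σ y <;> cases hc : σ (x ⊔ y) <;>
        cases hd3 : σ (y ⊓ x) <;> cases he : σ (y ⊓ xᶜ) <;> simp_all
    have hinf : ∀ x y : A, σ (x ⊓ y) = (σ x && σ y) := by
      intro x y
      have h : x ⊓ y = (xᶜ ⊔ yᶜ)ᶜ := by rw [compl_sup, compl_compl, compl_compl]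
      rw [h, hcompl, hsup, hcompl, hcompl]
      cases hx : σ x <;> cases hy : σ y <;> simp [hx, hy]
    exact ⟨fun _ a => σ a,
      ⟨fun S _ _ _ => ⟨ht, hb, fun x _ y _ => hsup x y, fun x _ y _ => hinf x y,
        fun x _ => hcompl x⟩,
       fun _ _ _ _ _ _ _ _ _ a _ => rfl⟩,
      fun a => rfl⟩
end

section
/- If A is a Boolean algebra in which every element other than ⊥ and ⊤ lies in some 8-element Boolean subalgebra (equivalently, A has no 4-element 'isolated' blocks; e.g., A is a Boolean algebra with at least 3 atoms or is atomless), then the only natural family of automorphisms ν_B of all Boolean subalgebras B ⊆ A compatible with inclusions (ν_{B'} = ν_B restricted to B' for B' ⊆ B) is the identity family. -/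
/-- `f` restricts to a Boolean algebra automorphism of the subalgebra `B`. -/
def IsAutOn {A : Type*} [BooleanAlgebra A] (B : Set A) (f : A → A) : Prop :=
  Set.BijOn f B B ∧ f ⊥ = ⊥ ∧ f ⊤ = ⊤ ∧
    (∀ x ∈ B, ∀ y ∈ B, f (x ⊔ y) = f x ⊔ f y) ∧
    (∀ x ∈ B, ∀ y ∈ B, f (x ⊓ y) = f x ⊓ f y) ∧
    (∀ x ∈ B, f xᶜ = (f x)ᶜ)

/-- The four-element set `{⊥, ⊤, p, pᶜ}` is a Boolean subalgebra. -/
lemma pairAlg {A : Type*} [BooleanAlgebra A] (p : A) :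
    IsBoolSubalg ({⊥, ⊤, p, pᶜ} : Set A) := by
  refine ⟨by simp, by simp, ?_, ?_, ?_⟩
  · intro x hx y hy
    simp only [Set.mem_insert_iff, Set.mem_singleton_iff] at *
    rcases hx with h|h|h|h <;> rcases hy with h'|h'|h'|h' <;> subst h <;> subst h' <;> simp
  · intro x hx y hy
    simp only [Set.mem_insert_iff, Set.mem_singleton_iff] at *
    rcases hx with h|h|h|h <;> rcases hy with h'|h'|h'|h' <;> subst h <;> subst h' <;> simp
  · intro x hx
    simp only [Set.mem_insert_iff, Set.mem_singleton_iff] at *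
    rcases hx with h|h|h|h <;> subst h <;> simp

/-- Suppose every nontrivial element of a Boolean algebra `A` lies in some 8-element
Boolean subalgebra. Then any family of automorphisms `ν B` of all Boolean subalgebras
`B` that is compatible with inclusions is the identity family. -/
theorem natural_automorphism_family_is_identity {A : Type*} [BooleanAlgebra A]
    (hA : ∀ p : A, ⊥ < p → p < ⊤ → ∃ C : Set A, IsBoolSubalg C ∧ C.ncard = 8 ∧ p ∈ C)
    (ν : Set A → A → A)
    (haut : ∀ B : Set A, IsBoolSubalg B → IsAutOn B (ν B))
    (hcompat : ∀ B B' : Set A, IsBoolSubalg B → IsBoolSubalg B' → B' ⊆ B →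
      ∀ a ∈ B', ν B a = ν B' a) :
    ∀ B : Set A, IsBoolSubalg B → ∀ a ∈ B, ν B a = a := by
  -- For every nontrivial element p of a subalgebra C, `ν C p` is `p` or `pᶜ`.
  have key : ∀ C : Set A, IsBoolSubalg C → ∀ p ∈ C, p ≠ ⊥ → p ≠ ⊤ →
      ν C p = p ∨ ν C p = pᶜ := by
    intro C hC p hpC hp0 hp1
    set D : Set A := {⊥, ⊤, p, pᶜ} with hD
    have hDalg : IsBoolSubalg D := pairAlg p
    have hDC : D ⊆ C := by
      intro x hx
      rcases hx with h|h|h|h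
      · exact h ▸ hC.1
      · exact h ▸ hC.2.1
      · exact h ▸ hpC
      · exact h ▸ hC.2.2.2.2 p hpC
    have hpD : p ∈ D := by simp [hD]
    have hcomp := hcompat C D hC hDalg hDC p hpD
    obtain ⟨hbij, hb, ht, -, -, -⟩ := haut D hDalg
    have hmem : ν D p ∈ D := hbij.mapsTo hpD
    rcases hmem with h|h|h|h
    · exact absurd (hbij.injOn hpD hDalg.1 (h.trans hb.symm)) hp0
    · exact absurd (hbij.injOn hpD hDalg.2.1 (h.trans ht.symm)) hp1
    · exact Or.inl (hcomp.trans h)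
    · exact Or.inr (hcomp.trans h)
  intro B hB a haB
  by_cases h0 : a = ⊥
  · subst h0; exact (haut B hB).2.1
  by_cases h1 : a = ⊤
  · subst h1; exact (haut B hB).2.2.1
  obtain ⟨C, hC, hC8, haC⟩ := hA a (bot_lt_iff_ne_bot.mpr h0) (lt_top_iff_ne_top.mpr h1)
  -- `ν C a = a`
  have hca : ν C a = a := by
    rcases key C hC a haC h0 h1 with h | h
    · exact h
    exfalso
    -- find b ∈ C outside {⊥, ⊤, a, aᶜ}
    have hnsub : ¬ C ⊆ ({⊥, ⊤, a, aᶜ} : Set A) := by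
      intro hsub
      have h4 : ({⊥, ⊤, a, aᶜ} : Set A).ncard ≤ 4 := by
        calc ({⊥, ⊤, a, aᶜ} : Set A).ncard
            ≤ ({⊤, a, aᶜ} : Set A).ncard + 1 := Set.ncard_insert_le _ _
          _ ≤ (({a, aᶜ} : Set A).ncard + 1) + 1 := by
              exact Nat.add_le_add_right (Set.ncard_insert_le _ _) 1
          _ ≤ ((({aᶜ} : Set A).ncard + 1) + 1) + 1 := by
              exact Nat.add_le_add_right (Nat.add_le_add_right (Set.ncard_insert_le _ _) 1) 1
          _ ≤ 4 := by simp
      have := Set.ncard_le_ncard hsub (Set.toFinite _)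
      omega
    obtain ⟨b, hbC, hbn⟩ := Set.not_subset.mp hnsub
    simp only [Set.mem_insert_iff, Set.mem_singleton_iff, not_or] at hbn
    obtain ⟨hb0, hb1, hba, hba'⟩ := hbn
    obtain ⟨-, hbot, -, -, hinf, -⟩ := haut C hC
    have hcmem : a ⊓ b ∈ C := hC.2.2.2.1 a haC b hbC
    have hctop : a ⊓ b ≠ ⊤ := by
      intro hc
      exact h1 (inf_eq_top_iff.mp hc).1
    rcases key C hC b hbC hb0 hb1 with hb | hb
    · -- ν C b = b, so ν C (a ⊓ b) = aᶜ ⊓ b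
      have hνc : ν C (a ⊓ b) = aᶜ ⊓ b := by rw [hinf a haC b hbC, h, hb]
      by_cases hcbot : a ⊓ b = ⊥
      · have hzb : aᶜ ⊓ b = ⊥ := by rw [← hνc, hcbot, hbot]
        have : b = ⊥ := by
          have : b = (a ⊓ b) ⊔ (aᶜ ⊓ b) := by
            rw [← inf_sup_right, sup_compl_eq_top, top_inf_eq]
          rw [this, hcbot, hzb, sup_idem]
        exact hb0 this
      rcases key C hC _ hcmem hcbot hctop with hc | hc
      · -- a ⊓ b = aᶜ ⊓ b
        have heq : a ⊓ b = aᶜ ⊓ b := by rw [← hc, hνc]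
        have : a ⊓ b ≤ ⊥ := by
          calc a ⊓ b ≤ a ⊓ aᶜ := le_inf inf_le_left (heq.le.trans inf_le_left)
            _ = ⊥ := inf_compl_eq_bot
        exact hcbot (le_bot_iff.mp this)
      · -- aᶜ ⊓ b = (a ⊓ b)ᶜ = aᶜ ⊔ bᶜ
        have heq : aᶜ ⊓ b = aᶜ ⊔ bᶜ := by rw [← hνc, hc, compl_inf]
        have h2 : bᶜ ≤ b := by
          calc bᶜ ≤ aᶜ ⊔ bᶜ := le_sup_right
            _ = aᶜ ⊓ b := heq.symm
            _ ≤ b := inf_le_right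
        have : (⊤ : A) ≤ b := by
          rw [← sup_compl_eq_top (x := b)]
          exact sup_le le_rfl h2
        exact hb1 (top_le_iff.mp this)
    · -- ν C b = bᶜ, so ν C (a ⊓ b) = aᶜ ⊓ bᶜ
      have hνc : ν C (a ⊓ b) = aᶜ ⊓ bᶜ := by rw [hinf a haC b hbC, h, hb]
      by_cases hcbot : a ⊓ b = ⊥
      · have hzb : aᶜ ⊓ bᶜ = ⊥ := by rw [← hνc, hcbot, hbot]
        have hco : a ⊔ b = ⊤ := by
          have : (a ⊔ b)ᶜ = ⊥ := by rw [compl_sup]; exact hzb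
          simpa using congrArg compl this
        have : aᶜ = b :=
          IsCompl.compl_eq ⟨disjoint_iff.mpr hcbot, codisjoint_iff.mpr hco⟩
        exact hba' this.symm
      rcases key C hC _ hcmem hcbot hctop with hc | hc
      · -- a ⊓ b = aᶜ ⊓ bᶜ
        have heq : a ⊓ b = aᶜ ⊓ bᶜ := by rw [← hc, hνc]
        have : a ⊓ b ≤ ⊥ := by
          calc a ⊓ b ≤ a ⊓ aᶜ := le_inf inf_le_left (heq.le.trans inf_le_left)
            _ = ⊥ := inf_compl_eq_bot
        exact hcbot (le_bot_iff.mp this)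
      · -- aᶜ ⊓ bᶜ = aᶜ ⊔ bᶜ hence a = b
        have heq : aᶜ ⊓ bᶜ = aᶜ ⊔ bᶜ := by rw [← hνc, hc, compl_inf]
        have hab : aᶜ = bᶜ := le_antisymm
          (le_sup_left.trans (heq.symm.le.trans inf_le_right))
          (le_sup_right.trans (heq.symm.le.trans inf_le_left))
        exact hba (compl_injective hab).symm
  -- now transfer from C to B through the common subalgebra {⊥, ⊤, a, aᶜ}
  set D : Set A := {⊥, ⊤, a, aᶜ} with hD
  have hDalg : IsBoolSubalg D := pairAlg a
  have hsubOf : ∀ E : Set A, IsBoolSubalg E → a ∈ E → D ⊆ E := by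
    intro E hE haE x hx
    rcases hx with hh|hh|hh|hh
    · exact hh ▸ hE.1
    · exact hh ▸ hE.2.1
    · exact hh ▸ haE
    · exact hh ▸ hE.2.2.2.2 a haE
  have haD : a ∈ D := by simp [hD]
  calc ν B a = ν D a := hcompat B D hB hDalg (hsubOf B hB haB) a haD
    _ = ν C a := (hcompat C D hC hDalg (hsubOf C hC haC) a haD).symm
    _ = a := hca
end

section
/- Let P be a poset. The Heyting algebra of downsets of P satisfies the law ((y → x) → y) → y = ⊤ for all x, y if and only if P has height 0 (i.e., P is an antichain). -/
lemma lowerSet_mem_himp {P : Type*} [PartialOrder P] {U V : LowerSet P} {p : P} :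
    p ∈ U ⇨ V ↔ ∀ q ≤ p, q ∈ U → q ∈ V := by
  rw [← LowerSet.Iic_le, le_himp_iff]
  constructor
  · intro h q hq hU
    exact h ⟨LowerSet.mem_Iic_iff.2 hq, hU⟩
  · rintro h q ⟨hq, hU⟩
    exact h q (LowerSet.mem_Iic_iff.1 hq) hU

/-- The Heyting algebra of down-sets of a poset `P` satisfies Peirce's law
`((V ⇨ U) ⇨ V) ⇨ V = ⊤` if and only if `P` has height 0, i.e. `P` is an antichain. -/
theorem peirce_iff_antichain (P : Type*) [PartialOrder P] :
    (∀ U V : LowerSet P, ((V ⇨ U) ⇨ V) ⇨ V = ⊤) ↔ ∀ p q : P, p ≤ q → p = q := by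
  constructor
  · intro h p q hpq
    by_contra hne
    have hqp : ¬ q ≤ p := fun hh => hne (le_antisymm hpq hh)
    set V : LowerSet P := ⟨{x | ¬ q ≤ x}, fun a b hba ha hq => ha (hq.trans hba)⟩ with hV
    have hq : q ∈ ((V ⇨ (⊥ : LowerSet P)) ⇨ V) ⇨ V := by
      rw [h ⊥ V]; trivial
    have hq2 : q ∈ (V ⇨ (⊥ : LowerSet P)) ⇨ V := by
      rw [lowerSet_mem_himp]
      intro r hr hrmem
      exfalso
      rw [lowerSet_mem_himp] at hrmem
      have hqr : q ≤ r := by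
        by_contra hc
        exact hrmem r le_rfl hc
      have : r = q := le_antisymm hr hqr
      subst this
      exact hrmem p hpq hqp
    have := lowerSet_mem_himp.1 hq q le_rfl hq2
    exact this le_rfl
  · intro h U V
    rw [eq_top_iff]
    rintro p -
    show p ∈ ((V ⇨ U) ⇨ V) ⇨ V
    rw [lowerSet_mem_himp]
    intro q hq hmem
    rw [lowerSet_mem_himp] at hmem
    by_cases hV : q ∈ V
    · exact hV
    · apply hmem q le_rfl
      rw [lowerSet_mem_himp]
      intro r hr hrV
      exact absurd (h r q hr ▸ hrV) hV
end
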